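/- In an infinite word over a pushdown alphabet, if i_c is a call position with matching return i_r, then every maximal abstract path that visits a position h with i_c + 1 ≤ h ≤ i_r − 1 is finite and terminates at some position k < i_r. -/
import Mathlib


/-- The type of a position in a word over a pushdown alphabet. -/
inductive SymType : Type
  | call | ret | int
deriving DecidableEq

/-- The factor strictly between `i` and `j` is well matched:
calls and returns balance out, and no prefix has more returns than calls. -/
def wellMatched (kind : ℕ → SymType) (i j : ℕ) : Prop :=
  (((Finset.Ioo i j).filter fun k => kind k = SymType.call).card =
   ((Finset.Ioo i j).filter fun k => kind k = SymType.ret).card) ∧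
  ∀ m ∈ Finset.Ioo i j,
    ((Finset.Ioc i m).filter fun k => kind k = SymType.ret).card ≤
    ((Finset.Ioc i m).filter fun k => kind k = SymType.call).card

/-- `j` is the matching return of the call `i`: the least return `j > i`
such that the factor strictly between `i` and `j` is well matched. -/
def MatchRet (kind : ℕ → SymType) (i j : ℕ) : Prop :=
  kind i = SymType.call ∧ i < j ∧ kind j = SymType.ret ∧ wellMatched kind i j ∧
  ∀ j', i < j' → j' < j → ¬ (kind j' = SymType.ret ∧ wellMatched kind i j')

/-- The abstract successor relation: a matched call maps to its matching
return; any non-call position maps to the next position provided it is not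
a return. Unmatched calls (and positions followed by a return) have no
abstract successor. -/
def absSucc (kind : ℕ → SymType) (i j : ℕ) : Prop :=
  (kind i = SymType.call ∧ MatchRet kind i j) ∨
  (kind i ≠ SymType.call ∧ j = i + 1 ∧ kind (i + 1) ≠ SymType.ret)

/-- `j` is reachable from `i` along abstract successors. -/
def reach (kind : ℕ → SymType) : ℕ → ℕ → Prop := Relation.ReflTransGen (absSucc kind)

/-- `i` and `j` lie on the same maximal abstract path (MAP). -/
def onSameMAP (kind : ℕ → SymType) (i j : ℕ) : Prop := reach kind i j ∨ reach kind j i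

/-- `s` is the initial position of a MAP: nothing maps to it. -/
def isMAPStart (kind : ℕ → SymType) (s : ℕ) : Prop := ∀ k, ¬ absSucc kind k s

/-- `s` is the initial position of the MAP visiting `i`. -/
def startsMAPOf (kind : ℕ → SymType) (s i : ℕ) : Prop := isMAPStart kind s ∧ reach kind s i

/-- The MAP visiting `i` is infinite (has no last position). -/
def infMAP (kind : ℕ → SymType) (i : ℕ) : Prop := ∀ j, reach kind i j → ∃ k, absSucc kind j k

/-- `p_∞` holds at `i` iff the MAP visiting `i` does not start at a position
`s > 0` such that `s - 1` is a call having a matching return. -/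
def pInf (kind : ℕ → SymType) (i : ℕ) : Prop :=
  ¬ ∃ s, startsMAPOf kind s i ∧ 0 < s ∧ kind (s - 1) = SymType.call ∧
    ∃ r, MatchRet kind (s - 1) r
/-- Count of positions of type `t` in `Ioc a b`. -/
def cnt (kind : ℕ → SymType) (t : SymType) (a b : ℕ) : ℕ :=
  ((Finset.Ioc a b).filter fun k => kind k = t).card

lemma cnt_self (kind : ℕ → SymType) (t : SymType) (a : ℕ) : cnt kind t a a = 0 := by
  simp [cnt]

lemma cnt_split (kind : ℕ → SymType) (t : SymType) {a b c : ℕ} (hab : a ≤ b) (hbc : b ≤ c) :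
    cnt kind t a c = cnt kind t a b + cnt kind t b c := by
  unfold cnt
  rw [← Finset.Ioc_union_Ioc_eq_Ioc hab hbc, Finset.filter_union,
    Finset.card_union_of_disjoint]
  apply Finset.disjoint_filter_filter
  intro s hs1 hs2 x hx
  have h1 := hs1 hx
  have h2 := hs2 hx
  simp only [Finset.mem_Ioc] at h1 h2
  omega

lemma cnt_last (kind : ℕ → SymType) (t : SymType) {a b : ℕ} (hab : a < b) :
    cnt kind t a b = cnt kind t a (b - 1) + (if kind b = t then 1 else 0) := by
  have h1 : a ≤ b - 1 := by omega
  have h2 : b - 1 ≤ b := by omega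
  rw [cnt_split kind t h1 h2]
  congr 1
  have : Finset.Ioc (b - 1) b = {b} := by
    ext x; simp only [Finset.mem_Ioc, Finset.mem_singleton]; omega
  unfold cnt
  rw [this, Finset.filter_singleton]
  split <;> simp

lemma Ioo_eq_Ioc_pred (a b : ℕ) : Finset.Ioo a b = Finset.Ioc a (b - 1) := by
  ext x; simp only [Finset.mem_Ioo, Finset.mem_Ioc]; omega

lemma wm_bal {kind : ℕ → SymType} {a b : ℕ} (hw : wellMatched kind a b) :
    cnt kind SymType.call a (b - 1) = cnt kind SymType.ret a (b - 1) := by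
  have := hw.1
  rwa [Ioo_eq_Ioc_pred] at this

lemma wm_pref {kind : ℕ → SymType} {a b m : ℕ} (hw : wellMatched kind a b)
    (h1 : a < m) (h2 : m < b) :
    cnt kind SymType.ret a m ≤ cnt kind SymType.call a m := by
  exact hw.2 m (Finset.mem_Ioo.mpr ⟨h1, h2⟩)

/-- Inside a well-matched region, the height at a call position is positive. -/
lemma call_strict {kind : ℕ → SymType} {ic ir i : ℕ} (hmatch : MatchRet kind ic ir)
    (hi1 : ic < i) (hi2 : i < ir) (hcall : kind i = SymType.call) :
    cnt kind SymType.ret ic i + 1 ≤ cnt kind SymType.call ic i := by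
  obtain ⟨_, hlt, _, hw, _⟩ := hmatch
  have hc := cnt_last kind SymType.call hi1
  have hr := cnt_last kind SymType.ret hi1
  rw [if_pos hcall] at hc
  rw [if_neg (by rw [hcall]; intro hcon; exact absurd hcon (by simp))] at hr
  have hpre : cnt kind SymType.ret ic (i - 1) ≤ cnt kind SymType.call ic (i - 1) := by
    rcases Nat.lt_or_ge ic (i - 1) with hh | hh
    · exact wm_pref hw hh (by omega)
    · have : i - 1 = ic := by omega
      rw [this, cnt_self, cnt_self]
  omega

/-- Nesting: the matching return of a call strictly inside a matched pair
lies strictly inside it. -/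
lemma nesting {kind : ℕ → SymType} {ic ir i j : ℕ} (hmatch : MatchRet kind ic ir)
    (hi1 : ic < i) (hi2 : i < ir) (hm : MatchRet kind i j) : j < ir := by
  by_contra hcon
  push_neg at hcon
  obtain ⟨hcall, hij, hjret, hwj, hmin⟩ := hm
  have hirret : kind ir = SymType.ret := hmatch.2.2.1
  have hwir : wellMatched kind ic ir := hmatch.2.2.2.1
  have hstrict := call_strict hmatch hi1 hi2 hcall
  -- balance over the whole pair, split at i
  have hbal := wm_bal hwir
  have h3 : i ≤ ir - 1 := by omega
  have hc := cnt_split kind SymType.call (le_of_lt hi1) h3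
  have hr := cnt_split kind SymType.ret (le_of_lt hi1) h3
  rcases eq_or_lt_of_le hcon with heq | hlt
  · -- j = ir : inner balance contradicts strict positivity at the call i
    subst heq
    have hbalj := wm_bal hwj
    omega
  · -- j > ir : the prefix condition of `wellMatched i j` fails at m = ir
    have hpref := wm_pref hwj hi2 hlt
    have hcl := cnt_last kind SymType.call hi2
    have hrl := cnt_last kind SymType.ret hi2
    rw [if_pos hirret] at hrl
    rw [if_neg (by rw [hirret]; intro hcon2; exact absurd hcon2 (by simp))] at hcl
    -- inner prefix up to ir-1 vs whole-pair balance
    have hq : cnt kind SymType.ret i (ir - 1) + 1 ≤ cnt kind SymType.call i (ir - 1) := by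
      omega
    omega

lemma map_aux (kind : ℕ → SymType) (ic ir : ℕ) (hmatch : MatchRet kind ic ir) :
    ∀ n h, ic < h → h < ir → ir - h ≤ n →
      ∃ k, reach kind h k ∧ (∀ m, ¬ absSucc kind k m) ∧ k < ir := by
  intro n
  induction n with
  | zero => intro h hh1 hh2 hh3; omega
  | succ n ih =>
    intro h hh1 hh2 hh3
    by_cases hcall : kind h = SymType.call
    · by_cases hex : ∃ j, MatchRet kind h j
      · obtain ⟨j, hj⟩ := hex
        have hjlt : j < ir := nesting hmatch hh1 hh2 hj
        have hjgt : h < j := hj.2.1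
        obtain ⟨k, hk1, hk2, hk3⟩ := ih j (by omega) hjlt (by omega)
        exact ⟨k, Relation.ReflTransGen.head (Or.inl ⟨hcall, hj⟩) hk1, hk2, hk3⟩
      · refine ⟨h, Relation.ReflTransGen.refl, ?_, hh2⟩
        intro m hm
        rcases hm with ⟨_, hmr⟩ | ⟨hnc, _, _⟩
        · exact hex ⟨m, hmr⟩
        · exact hnc hcall
    · by_cases hret : kind (h + 1) = SymType.ret
      · refine ⟨h, Relation.ReflTransGen.refl, ?_, hh2⟩
        intro m hm
        rcases hm with ⟨hc, _⟩ | ⟨_, _, hnr⟩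
        · exact hcall hc
        · exact hnr hret
      · have hne : h + 1 ≠ ir := by
          intro hcon; rw [hcon] at hret; exact hret hmatch.2.2.1
        have hlt : h + 1 < ir := by omega
        obtain ⟨k, hk1, hk2, hk3⟩ := ih (h + 1) (by omega) hlt (by omega)
        exact ⟨k, Relation.ReflTransGen.head (Or.inr ⟨hcall, rfl, hret⟩) hk1, hk2, hk3⟩

/-- every MAP visiting a position strictly inside a matched
call–return pair is finite and terminates at a position `k < i_r`. -/
theorem map_inside_matched_call_finite (kind : ℕ → SymType) (ic ir h : ℕ)
    (hmatch : MatchRet kind ic ir) (h1 : ic + 1 ≤ h) (h2 : h ≤ ir - 1) :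
    ∃ k, reach kind h k ∧ (∀ m, ¬ absSucc kind k m) ∧ k < ir := by
  have hlt : ic < ir := hmatch.2.1
  exact map_aux kind ic ir hmatch (ir - h) h (by omega) (by omega) le_rfl
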